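/- Let A be an n×n complex matrix of index k and let m ≥ 1 be an integer. Then an n×n complex matrix X satisfies the system XAX = X, AX = (A⊕)^m A^m P_{A^m}, and XA = (A⊕)^{m+1} A^m P_{A^m} A if and only if X = A^{#_m}; in particular this system is consistent and has a unique solution. -/

import Mathlib

/-!
Write `C = A⊕`, `P = A^m (A^m)†` and `W = C^{m+1} A^m P`. Since the ranges of the powers of `A`
stabilise from `k` on, `AC` and `P` are idempotents whose ranges contain `R(C) = R(A^k)`, so
`ACC = C` and `PC = C`. From these and `CAC = C` the identities `AW = C^m A^m P` and `WAW = W`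
follow by pure monoid algebra, and `W` is the only outer inverse `X` of `A` with `AX = AW` and
`XA = WA`.
-/

open Matrix

/-- `X` is the Moore–Penrose inverse of `A` (four Penrose equations). -/
def MoorePenroseOf {n : ℕ} (A X : Matrix (Fin n) (Fin n) ℂ) : Prop :=
  A * X * A = A ∧ X * A * X = X ∧ (A * X)ᴴ = A * X ∧ (X * A)ᴴ = X * A

/-- Column space of a square complex matrix. -/
noncomputable def colSpace {n : ℕ} (A : Matrix (Fin n) (Fin n) ℂ) : Submodule ℂ (Fin n → ℂ) :=
  LinearMap.range A.mulVecLin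

/-- Null space of a square complex matrix. -/
noncomputable def nullSpace {n : ℕ} (A : Matrix (Fin n) (Fin n) ℂ) : Submodule ℂ (Fin n → ℂ) :=
  LinearMap.ker A.mulVecLin

/-- `k` is the index of `A`: the smallest nonnegative integer with
`rank(A^k) = rank(A^(k+1))`. -/
def HasIndex {n : ℕ} (A : Matrix (Fin n) (Fin n) ℂ) (k : ℕ) : Prop :=
  (A ^ k).rank = (A ^ (k + 1)).rank ∧ ∀ j < k, (A ^ j).rank ≠ (A ^ (j + 1)).rank

/-- `X` is the core-EP inverse of `A` (where `k = Ind(A)`): `XAX = X` and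
`R(X) = R(Xᴴ) = R(A^k)`. -/
def IsCoreEP {n : ℕ} (A X : Matrix (Fin n) (Fin n) ℂ) (k : ℕ) : Prop :=
  X * A * X = X ∧ colSpace X = colSpace (A ^ k) ∧ colSpace Xᴴ = colSpace (A ^ k)

section Monoid

variable {M : Type*} [Monoid M] {A C P X W : M}

theorem eq_of_outer_inverse_of_mul_eq_mul (hX : X * A * X = X) (hW : W * A * W = W)
    (hAX : A * X = A * W) (hXA : X * A = W * A) : X = W :=
  calc X = X * (A * X) := by rw [← mul_assoc, hX]
    _ = W * A * W := by rw [hAX, ← mul_assoc, hXA]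
    _ = W := hW

theorem mul_pow_add_two (hACC : A * C * C = C) (i : ℕ) : A * C ^ (i + 2) = C ^ (i + 1) := by
  rw [pow_succ', pow_succ', ← mul_assoc, ← mul_assoc, hACC]

theorem pow_succ_mul_pow_succ (hACC : A * C * C = C) (j : ℕ) :
    A ^ (j + 1) * C ^ (j + 1) = A * C := by
  induction j with
  | zero => simp
  | succ i ih =>
    calc A ^ (i + 2) * C ^ (i + 2) = A ^ (i + 1) * (A * C ^ (i + 2)) := by
          rw [pow_succ A (i + 1), mul_assoc]
      _ = A * C := by rw [mul_pow_add_two hACC, ih]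

variable {m : ℕ}

theorem mul_weakCore (hACC : A * C * C = C) (hm : 1 ≤ m) :
    A * (C ^ (m + 1) * A ^ m * P) = C ^ m * A ^ m * P := by
  obtain ⟨m, rfl⟩ := Nat.exists_eq_add_of_le' hm
  rw [← mul_assoc, ← mul_assoc, mul_pow_add_two hACC]

theorem weakCore_mul_mul_self (hCAC : C * A * C = C) (hACC : A * C * C = C) (hPC : P * C = C)
    (hm : 1 ≤ m) : C ^ (m + 1) * A ^ m * P * A * (C ^ (m + 1) * A ^ m * P) =
      C ^ (m + 1) * A ^ m * P := by
  obtain ⟨m, rfl⟩ := Nat.exists_eq_add_of_le' hm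
  have hPCm : P * C ^ (m + 1) = C ^ (m + 1) := by rw [pow_succ', ← mul_assoc, hPC]
  calc C ^ (m + 2) * A ^ (m + 1) * P * A * (C ^ (m + 2) * A ^ (m + 1) * P)
        = C ^ (m + 2) * A ^ (m + 1) * P * (A * C ^ (m + 2)) * A ^ (m + 1) * P := by
          simp only [mul_assoc]
      _ = C ^ (m + 2) * A ^ (m + 1) * (P * C ^ (m + 1)) * A ^ (m + 1) * P := by
          rw [mul_pow_add_two hACC]; simp only [mul_assoc]
      _ = C ^ (m + 2) * (A ^ (m + 1) * C ^ (m + 1)) * A ^ (m + 1) * P := by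
          rw [hPCm]; simp only [mul_assoc]
      _ = C ^ (m + 1) * (C * A * C) * A ^ (m + 1) * P := by
          rw [pow_succ_mul_pow_succ hACC, pow_succ C (m + 1)]; simp only [mul_assoc]
      _ = C ^ (m + 2) * A ^ (m + 1) * P := by rw [hCAC, ← pow_succ]

end Monoid

section ColSpace

variable {n : ℕ}

theorem colSpace_mul (M N : Matrix (Fin n) (Fin n) ℂ) :
    colSpace (M * N) = (colSpace N).map M.mulVecLin := by
  rw [colSpace, colSpace, mulVecLin_mul, LinearMap.range_comp]

theorem colSpace_mul_le (M N : Matrix (Fin n) (Fin n) ℂ) : colSpace (M * N) ≤ colSpace M := by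
  rw [colSpace, colSpace, mulVecLin_mul]
  exact LinearMap.range_comp_le_range _ _

theorem mul_eq_self_of_colSpace_le {Q M : Matrix (Fin n) (Fin n) ℂ} (hQ : Q * Q = Q)
    (h : colSpace M ≤ colSpace Q) : Q * M = M := by
  refine toLin'.injective (LinearMap.ext fun x => ?_)
  obtain ⟨y, hy⟩ := h (LinearMap.mem_range_self M.mulVecLin x)
  rw [mulVecLin_apply, mulVecLin_apply] at hy
  change (Q * M) *ᵥ x = M *ᵥ x
  rw [← mulVec_mulVec, ← hy, mulVec_mulVec, hQ]

variable {A : Matrix (Fin n) (Fin n) ℂ} {k : ℕ}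

theorem colSpace_pow_succ_eq (hk : (A ^ k).rank = (A ^ (k + 1)).rank) :
    colSpace (A ^ (k + 1)) = colSpace (A ^ k) := by
  rw [pow_succ] at hk ⊢
  exact Submodule.eq_of_le_of_finrank_eq (colSpace_mul_le _ _) hk.symm

theorem colSpace_pow_add_eq (hk : (A ^ k).rank = (A ^ (k + 1)).rank) (j : ℕ) :
    colSpace (A ^ (k + j)) = colSpace (A ^ k) := by
  induction j with
  | zero => rfl
  | succ j ih =>
    rw [← add_assoc, pow_succ', colSpace_mul, ih, ← colSpace_mul, ← pow_succ',
      colSpace_pow_succ_eq hk]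

theorem colSpace_pow_le_colSpace_pow (hk : (A ^ k).rank = (A ^ (k + 1)).rank) (m : ℕ) :
    colSpace (A ^ k) ≤ colSpace (A ^ m) := by
  rw [← colSpace_pow_add_eq hk m, add_comm, pow_add]
  exact colSpace_mul_le _ _

theorem MoorePenroseOf.mul_mul_eq_of_colSpace_le {M X N : Matrix (Fin n) (Fin n) ℂ}
    (hMX : MoorePenroseOf M X) (hN : colSpace N ≤ colSpace M) : M * X * N = N := by
  have hMXM : M * X * M = M := hMX.1
  refine mul_eq_self_of_colSpace_le (by rw [← mul_assoc, hMXM]) (hN.trans ?_)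
  calc colSpace M = colSpace (M * X * M) := by rw [hMXM]
    _ ≤ colSpace (M * X) := colSpace_mul_le _ _

theorem IsCoreEP.mul_mul_self {C : Matrix (Fin n) (Fin n) ℂ} (hC : IsCoreEP A C k)
    (hk : (A ^ k).rank = (A ^ (k + 1)).rank) : A * C * C = C := by
  refine mul_eq_self_of_colSpace_le (by rw [mul_assoc, ← mul_assoc C, hC.1]) (le_of_eq ?_)
  rw [colSpace_mul, hC.2.1, ← colSpace_mul, ← pow_succ', colSpace_pow_succ_eq hk]

end ColSpace

/-- the system `XAX = X`, `AX = (A⊕)^m A^m P_{A^m}`,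
`XA = (A⊕)^{m+1} A^m P_{A^m} A` has `A^{#_m}` as its unique solution. -/
theorem stmt_12 {n k m : ℕ} (hm : 1 ≤ m)
    (A CEP AmDag : Matrix (Fin n) (Fin n) ℂ)
    (hInd : HasIndex A k)
    (hCEP : IsCoreEP A CEP k)
    (hMP : MoorePenroseOf (A ^ m) AmDag) :
    ∀ X : Matrix (Fin n) (Fin n) ℂ,
      (X * A * X = X ∧
       A * X = CEP ^ m * A ^ m * (A ^ m * AmDag) ∧
       X * A = CEP ^ (m + 1) * A ^ m * (A ^ m * AmDag) * A) ↔
      X = CEP ^ (m + 1) * A ^ m * (A ^ m * AmDag) := by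
  have hACC : A * CEP * CEP = CEP := hCEP.mul_mul_self hInd.1
  have hPC : A ^ m * AmDag * CEP = CEP :=
    hMP.mul_mul_eq_of_colSpace_le (hCEP.2.1 ▸ colSpace_pow_le_colSpace_pow hInd.1 m)
  have hAW := mul_weakCore (P := A ^ m * AmDag) hACC hm
  have hWAW := weakCore_mul_mul_self hCEP.1 hACC hPC hm
  intro X
  constructor
  · rintro ⟨hXAX, hAX, hXA⟩
    exact eq_of_outer_inverse_of_mul_eq_mul hXAX hWAW (hAX.trans hAW.symm) hXA
  · rintro rfl
    exact ⟨hWAW, hAW, rfl⟩
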